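/- arXiv:1607.01897 — 2 statements merged into one kernel-verified Lean document; each statement's English description precedes it below -/
import Mathlib

section
/- Let Γ₁ = {(e^{2πix/n}, e^{2πir₁x/n}) : x ∈ ℤ} and Γ₂ = {(e^{2πix/n}, e^{2πir₂x/n}) : x ∈ ℤ} be graph subgroups of SU(2) × SU(2), where r₁, r₂ ∈ (ℤ/n)^×. If Γ₁ and Γ₂ are almost conjugate in SU(2) × SU(2), then r₂ = ±r₁ (mod n), and consequently Γ₁ and Γ₂ are conjugate in SU(2) × SU(2). -/
/-!
Conjugacy classes of `SU(2)` are detected by the real part, so if the generator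
`(e^{2πi/n}, e^{2πir₁/n})` of `Γ₁` is conjugate to the element `(e^{2πiy/n}, e^{2πiyr₂/n})` of `Γ₂`,
then `cos (2π/n) = cos (2πy/n)` and `cos (2πr₁/n) = cos (2πyr₂/n)`, i.e. `y ≡ ±1` and
`r₁ ≡ ±y r₂ (mod n)`, whence `r₂ ≡ ±r₁`. Conversely `(1, 1)` or `(1, j)` conjugates the generator
of `Γ₁` to that of `Γ₂`, because `j` inverts the circle `e^{iθ}`.
-/

open Real

/-- Two subgroups `Γ₁`, `Γ₂` of a group `G` are almost conjugate if there is a bijection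
`φ : Γ₁ → Γ₂` such that every `γ ∈ Γ₁` is conjugate in `G` to `φ γ`. -/
def AlmostConjugate {G : Type*} [Group G] (Γ₁ Γ₂ : Subgroup G) : Prop :=
  ∃ φ : Γ₁ ≃ Γ₂, ∀ γ : Γ₁, IsConj (γ : G) ((φ γ : Γ₂) : G)

/-- The unit quaternion `e^{iθ} = cos θ + i sin θ`, as an element of `SU(2)` realized as
the group of unit quaternions. -/
noncomputable def circQ (θ : ℝ) : unitary (Quaternion ℝ) :=
  ⟨⟨Real.cos θ, Real.sin θ, 0, 0⟩, by
    have h : Quaternion.normSq (⟨Real.cos θ, Real.sin θ, 0, 0⟩ : Quaternion ℝ) = 1 := by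
      erw [Quaternion.normSq_def']
      simp [Real.cos_sq_add_sin_sq θ]
    erw [Unitary.mem_iff, Quaternion.star_mul_self, Quaternion.self_mul_star, h]
    simp⟩

/-- The graph subgroup `Γ_r = {(e^{2πix/n}, e^{2πirx/n}) : x ∈ ℤ}` of `SU(2) × SU(2)`. -/
noncomputable def graphSubgroup (n r : ℕ) : Subgroup (unitary (Quaternion ℝ) × unitary (Quaternion ℝ)) :=
  Subgroup.zpowers (circQ (2 * π / n), circQ (2 * π * r / n))

namespace Quaternion

variable {R : Type*} [CommRing R]

theorem re_mul_comm (a b : ℍ[R]) : (a * b).re = (b * a).re := by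
  simp only [re_mul]; ring

theorem re_eq_of_isConj {a b : ℍ[R]} (h : IsConj a b) : a.re = b.re := by
  obtain ⟨u, hu⟩ := h
  calc a.re = (↑u⁻¹ * (↑u * a) : ℍ[R]).re := by rw [← mul_assoc, Units.inv_mul, one_mul]
    _ = (↑u * a * ↑u⁻¹ : ℍ[R]).re := re_mul_comm _ _
    _ = b.re := by rw [hu.eq, mul_assoc, Units.mul_inv, mul_one]

end Quaternion

section circQ

variable (θ : ℝ)

@[simp] lemma circQ_re : (circQ θ : Quaternion ℝ).re = cos θ := rfl
@[simp] lemma circQ_imI : (circQ θ : Quaternion ℝ).imI = sin θ := rfl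
@[simp] lemma circQ_imJ : (circQ θ : Quaternion ℝ).imJ = 0 := rfl
@[simp] lemma circQ_imK : (circQ θ : Quaternion ℝ).imK = 0 := rfl

end circQ

lemma circQ_add (a b : ℝ) : circQ (a + b) = circQ a * circQ b := by
  apply Subtype.ext
  apply Quaternion.ext <;>
    simp [Quaternion.re_mul, Quaternion.imI_mul, Quaternion.imJ_mul, Quaternion.imK_mul, cos_add,
      sin_add]
  ring

lemma circQ_zero : circQ 0 = 1 := by
  apply Subtype.ext
  apply Quaternion.ext <;>
    simp [Quaternion.re_one, Quaternion.imI_one, Quaternion.imJ_one, Quaternion.imK_one]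

lemma circQ_zpow (θ : ℝ) (y : ℤ) : circQ θ ^ y = circQ (y * θ) := by
  let circQHom : Multiplicative ℝ →* unitary (Quaternion ℝ) :=
    { toFun := fun θ ↦ circQ θ.toAdd, map_one' := circQ_zero, map_mul' := circQ_add }
  exact (map_zpow circQHom (.ofAdd θ) y).symm.trans (congrArg circQ (zsmul_eq_mul θ y))

lemma circQ_eq_of_angle_eq {a b : ℝ} (h : (a : Angle) = b) : circQ a = circQ b := by
  have hcos : cos a = cos b := by rw [← Angle.cos_coe, h, Angle.cos_coe]
  have hsin : sin a = sin b := by rw [← Angle.sin_coe, h, Angle.sin_coe]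
  apply Subtype.ext
  apply Quaternion.ext <;> simp [hcos, hsin]

lemma cos_eq_of_isConj_circQ {a b : ℝ} (h : IsConj (circQ a) (circQ b)) : cos a = cos b :=
  Quaternion.re_eq_of_isConj ((unitary (Quaternion ℝ)).subtype.map_isConj h)

noncomputable def jQ : unitary (Quaternion ℝ) :=
  ⟨(⟨0, 0, 1, 0⟩ : Quaternion ℝ), by
    have h : Quaternion.normSq (⟨0, 0, 1, 0⟩ : Quaternion ℝ) = 1 := by
      erw [Quaternion.normSq_def']; norm_num
    erw [Unitary.mem_iff, Quaternion.star_mul_self, Quaternion.self_mul_star, h]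
    simp⟩

@[simp] lemma jQ_re : (jQ : Quaternion ℝ).re = 0 := rfl
@[simp] lemma jQ_imI : (jQ : Quaternion ℝ).imI = 0 := rfl
@[simp] lemma jQ_imJ : (jQ : Quaternion ℝ).imJ = 1 := rfl
@[simp] lemma jQ_imK : (jQ : Quaternion ℝ).imK = 0 := rfl

lemma conj_jQ_circQ (θ : ℝ) : MulAut.conj jQ (circQ θ) = circQ (-θ) := by
  rw [MulAut.conj_apply, mul_inv_eq_iff_eq_mul]
  apply Subtype.ext
  apply Quaternion.ext <;>
    simp [Quaternion.re_mul, Quaternion.imI_mul, Quaternion.imJ_mul, Quaternion.imK_mul]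

lemma angle_two_pi_mul_div_eq_iff {n : ℕ} (hn : n ≠ 0) (a b : ℤ) :
    ((2 * π * a / n : ℝ) : Angle) = (2 * π * b / n : ℝ) ↔ (a : ZMod n) = b := by
  rw [Angle.angle_eq_iff_two_pi_dvd_sub, ZMod.intCast_eq_intCast_iff_dvd_sub]
  have hsub : 2 * π * a / n - 2 * π * b / n = 2 * π * ((a - b : ℤ) / n) := by
    push_cast; ring
  have hn' : (n : ℝ) ≠ 0 := by exact_mod_cast hn
  simp_rw [hsub, mul_right_inj' two_pi_pos.ne', div_eq_iff hn', ← Int.cast_natCast (R := ℝ),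
    ← Int.cast_mul, Int.cast_inj]
  constructor
  · rintro ⟨k, hk⟩
    exact ⟨-k, by linear_combination -hk⟩
  · rintro ⟨k, hk⟩
    exact ⟨-k, by linear_combination -hk⟩

lemma cos_two_pi_mul_div_eq_iff {n : ℕ} (hn : n ≠ 0) (a b : ℤ) :
    cos (2 * π * a / n) = cos (2 * π * b / n) ↔ (a : ZMod n) = b ∨ (a : ZMod n) = -b := by
  rw [← Angle.cos_coe, ← Angle.cos_coe, Angle.cos_eq_iff_eq_or_eq_neg, ← Angle.coe_neg,
    ← neg_div, ← mul_neg, ← Int.cast_neg, angle_two_pi_mul_div_eq_iff hn,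
    angle_two_pi_mul_div_eq_iff hn, Int.cast_neg]

noncomputable def graphGen (n r : ℕ) : unitary (Quaternion ℝ) × unitary (Quaternion ℝ) :=
  (circQ (2 * π / n), circQ (2 * π * r / n))

lemma graphSubgroup_eq_zpowers (n r : ℕ) : graphSubgroup n r = Subgroup.zpowers (graphGen n r) :=
  rfl

lemma graphGen_zpow (n r : ℕ) (y : ℤ) :
    graphGen n r ^ y = (circQ (2 * π * y / n), circQ (2 * π * (y * r : ℤ) / n)) := by
  simp only [graphGen, Prod.pow_mk, circQ_zpow]
  congr 2 <;> push_cast <;> ring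

lemma eq_or_eq_neg_of_isConj_graphGen_zpow {n : ℕ} (hn : n ≠ 0) {r₁ r₂ : ℕ} {y : ℤ}
    (h : IsConj (graphGen n r₁) (graphGen n r₂ ^ y)) :
    (r₂ : ZMod n) = r₁ ∨ (r₂ : ZMod n) = -r₁ := by
  rw [graphGen_zpow] at h
  have hfst := cos_eq_of_isConj_circQ ((MonoidHom.fst _ _).map_isConj h)
  have hsnd := cos_eq_of_isConj_circQ ((MonoidHom.snd _ _).map_isConj h)
  rw [show 2 * π / n = 2 * π * ((1 : ℤ) : ℝ) / n by simp, cos_two_pi_mul_div_eq_iff hn] at hfst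
  rw [show 2 * π * r₁ / n = 2 * π * ((r₁ : ℤ) : ℝ) / n by simp,
    cos_two_pi_mul_div_eq_iff hn] at hsnd
  push_cast at hfst hsnd
  rcases hfst with hy | hy <;> rcases hsnd with h | h
  · left; linear_combination (r₂ : ZMod n) * hy - h
  · right; linear_combination (r₂ : ZMod n) * hy + h
  · right; linear_combination (r₂ : ZMod n) * hy + h
  · left; linear_combination (r₂ : ZMod n) * hy - h

lemma conj_graphGen_of_eq_or_eq_neg {n : ℕ} (hn : n ≠ 0) {r₁ r₂ : ℕ}
    (h : (r₂ : ZMod n) = r₁ ∨ (r₂ : ZMod n) = -r₁) :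
    ∃ g, MulAut.conj g (graphGen n r₁) = graphGen n r₂ := by
  have hangle (s : ℤ) (hs : (r₂ : ZMod n) = s) : circQ (2 * π * r₂ / n) = circQ (2 * π * s / n) :=
    circQ_eq_of_angle_eq <| (angle_two_pi_mul_div_eq_iff hn r₂ s).mpr (by exact_mod_cast hs)
  rcases h with h | h
  · exact ⟨1, by simp [graphGen, hangle r₁ (by exact_mod_cast h)]⟩
  · refine ⟨(1, jQ), ?_⟩
    simpa [graphGen, hangle (-r₁) (by push_cast; exact h), neg_div]
      using conj_jQ_circQ (2 * π * r₁ / n)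

theorem almost_conjugate_graph_subgroups_general (n r₁ r₂ : ℕ) (hn : 0 < n)
    (h : AlmostConjugate (graphSubgroup n r₁) (graphSubgroup n r₂)) :
    ((r₂ : ZMod n) = (r₁ : ZMod n) ∨ (r₂ : ZMod n) = -(r₁ : ZMod n)) ∧
    ∃ g : unitary (Quaternion ℝ) × unitary (Quaternion ℝ),
      Subgroup.map (MulAut.conj g).toMonoidHom (graphSubgroup n r₁)
        = graphSubgroup n r₂ := by
  obtain ⟨φ, hφ⟩ := h
  have hgen : graphGen n r₁ ∈ graphSubgroup n r₁ := Subgroup.mem_zpowers _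
  obtain ⟨y, hy⟩ := Subgroup.mem_zpowers_iff.mp (φ ⟨_, hgen⟩).2
  have hr := eq_or_eq_neg_of_isConj_graphGen_zpow hn.ne' (hy ▸ hφ ⟨_, hgen⟩)
  obtain ⟨g, hg⟩ := conj_graphGen_of_eq_or_eq_neg hn.ne' hr
  refine ⟨hr, g, ?_⟩
  rw [graphSubgroup_eq_zpowers, graphSubgroup_eq_zpowers, MonoidHom.map_zpowers]
  exact congrArg _ hg

/-- Let `Γ₁ = {(e^{2πix/n}, e^{2πir₁x/n})}` and `Γ₂ = {(e^{2πix/n}, e^{2πir₂x/n})}` be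
graph subgroups of `SU(2) × SU(2)` with `r₁, r₂` units mod `n`.  If `Γ₁` and `Γ₂` are
almost conjugate in `SU(2) × SU(2)`, then `r₂ = ± r₁ (mod n)`, and consequently `Γ₁` and
`Γ₂` are conjugate in `SU(2) × SU(2)`. -/
theorem almost_conjugate_graph_subgroups (n r₁ r₂ : ℕ) (hn : 0 < n)
    (h₁ : Nat.Coprime r₁ n) (h₂ : Nat.Coprime r₂ n)
    (h : AlmostConjugate (graphSubgroup n r₁) (graphSubgroup n r₂)) :
    ((r₂ : ZMod n) = (r₁ : ZMod n) ∨ (r₂ : ZMod n) = -(r₁ : ZMod n)) ∧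
    ∃ g : unitary (Quaternion ℝ) × unitary (Quaternion ℝ),
      Subgroup.map (MulAut.conj g).toMonoidHom (graphSubgroup n r₁)
        = graphSubgroup n r₂ :=
  almost_conjugate_graph_subgroups_general n r₁ r₂ hn h
end

section
/- The four homogeneous six-dimensional nearly Kähler manifolds, each equipped with the unique invariant nearly Kähler metric of scalar curvature κ, have pairwise distinct volumes; in particular vol(S⁶) = (30/κ)³·16π³/15, vol(ℂP³) = (30/κ)³·π³/6, vol(S³×S³) = (30/κ)³·8π⁴/(81√3), vol(F(1,2)) = (30/κ)³·π³/2, and no two of these quantities are equal (for fixed κ > 0). -/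
open Real

/-- The volumes of the four homogeneous six-dimensional nearly Kähler manifolds `S⁶`,
`ℂP³`, `S³ × S³` and `F(1,2)`, each endowed with the unique invariant nearly Kähler
metric of scalar curvature `κ > 0`, namely `(30/κ)³·16π³/15`, `(30/κ)³·π³/6`,
`(30/κ)³·8π⁴/(81√3)` and `(30/κ)³·π³/2`, are pairwise distinct. -/
theorem volumes_pairwise_distinct (κ : ℝ) (hκ : 0 < κ) :
    let volS6 : ℝ := (30 / κ) ^ 3 * (16 * π ^ 3 / 15)
    let volCP3 : ℝ := (30 / κ) ^ 3 * (π ^ 3 / 6)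
    let volS3S3 : ℝ := (30 / κ) ^ 3 * (8 * π ^ 4 / (81 * Real.sqrt 3))
    let volF12 : ℝ := (30 / κ) ^ 3 * (π ^ 3 / 2)
    volS6 ≠ volCP3 ∧ volS6 ≠ volS3S3 ∧ volS6 ≠ volF12 ∧
      volCP3 ≠ volS3S3 ∧ volCP3 ≠ volF12 ∧ volS3S3 ≠ volF12 := by
  intro volS6 volCP3 volS3S3 volF12
  have hc : (0:ℝ) < (30 / κ) ^ 3 := by positivity
  have hπ := Real.pi_pos
  have hπu : π < 3.15 := Real.pi_lt_d2
  have hπl : 3.14 < π := Real.pi_gt_d6.trans_le' (by norm_num)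
  have hs : Real.sqrt 3 ^ 2 = 3 := Real.sq_sqrt (by norm_num)
  have hs0 : (0:ℝ) < Real.sqrt 3 := Real.sqrt_pos.mpr (by norm_num)
  have hsu : Real.sqrt 3 < 1.8 := by nlinarith
  have hsl : 1.7 < Real.sqrt 3 := by nlinarith
  have key : ∀ a b : ℝ, a ≠ b → (30 / κ) ^ 3 * a ≠ (30 / κ) ^ 3 * b := by
    intro a b hab h
    exact hab (mul_left_cancel₀ hc.ne' h)
  refine ⟨key _ _ ?_, key _ _ ?_, key _ _ ?_, key _ _ ?_, key _ _ ?_, key _ _ ?_⟩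
  · intro h; nlinarith [pow_pos hπ 3]
  · intro h
    rw [div_eq_div_iff (by norm_num) (by positivity)] at h
    nlinarith [pow_pos hπ 3]
  · intro h; nlinarith [pow_pos hπ 3]
  · intro h
    rw [div_eq_div_iff (by norm_num) (by positivity)] at h
    nlinarith [pow_pos hπ 3]
  · intro h; nlinarith [pow_pos hπ 3]
  · intro h
    rw [div_eq_div_iff (by positivity) (by norm_num)] at h
    nlinarith [pow_pos hπ 3]
end
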